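/- Let R be a PVMD which is Clifford t-regular and M a t-maximal ideal of R. Then M belongs to T_t(R) if and only if M strictly contains the union ∪_N (M ∧ N), where N ranges over Max_t(R) \ {M} and M ∧ N denotes the largest prime ideal of R contained in M ∩ N. -/

import Mathlib

open Pointwise

/-- The `v`-closure (divisorial closure) of a submodule `I` of the `R`-algebra `K`:
`I_v = (R : (R : I)) = 1 / (1 / I)`. -/
noncomputable def vOp (R : Type*) [CommRing R] (K : Type*) [CommRing K] [Algebra R K]
    (I : Submodule R K) : Submodule R K :=
  1 / (1 / I)

/-- The `t`-closure of a submodule `I` of the `R`-algebra `K`: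
`I_t = ∪ J_v`, `J` ranging over the nonzero finitely generated submodules contained in `I`. -/
noncomputable def tOp (R : Type*) [CommRing R] (K : Type*) [CommRing K] [Algebra R K]
    (I : Submodule R K) : Submodule R K :=
  ⨆ J ∈ {J : Submodule R K | J ≠ ⊥ ∧ J.FG ∧ J ≤ I}, vOp R K J

variable (R : Type*) [CommRing R]

/-- The image of an integral ideal of `R` in the fraction field of `R`. -/
noncomputable def idealToFrac (I : Ideal R) : Submodule R (FractionRing R) :=
  Submodule.map (Algebra.linearMap R (FractionRing R)) I

/-- An integral ideal of `R` is a `t`-ideal if it is `t`-closed. -/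
noncomputable def IsTIdeal (I : Ideal R) : Prop :=
  tOp R (FractionRing R) (idealToFrac R I) = idealToFrac R I

/-- A (nonzero) `t`-prime ideal: a nonzero prime ideal which is a `t`-ideal. -/
structure IsTPrime (P : Ideal R) : Prop where
  ne_bot : P ≠ ⊥
  isPrime : P.IsPrime
  isT : IsTIdeal R P

/-- A `t`-maximal ideal: an ideal maximal among proper integral `t`-ideals
(such an ideal is necessarily nonzero and prime). -/
structure IsTMaximal (M : Ideal R) : Prop where
  ne_bot : M ≠ ⊥
  ne_top : M ≠ ⊤
  isPrime : M.IsPrime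
  isT : IsTIdeal R M
  isMax : ∀ J : Ideal R, J ≠ ⊤ → IsTIdeal R J → M ≤ J → J = M

/-- A nonzero fractional ideal of `R` (as a submodule of the fraction field). -/
def IsFracIdeal (I : Submodule R (FractionRing R)) : Prop :=
  I ≠ ⊥ ∧ IsFractional (nonZeroDivisors R) I

/-- A nonzero fractional `t`-ideal of `R`. -/
noncomputable def IsTFracIdeal (I : Submodule R (FractionRing R)) : Prop :=
  IsFracIdeal R I ∧ tOp R (FractionRing R) I = I

/-- `I` is `t`-invertible: `(I I⁻¹)_t = R`. -/
noncomputable def IsTInvertible (I : Submodule R (FractionRing R)) : Prop :=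
  tOp R (FractionRing R) (I * ((1 : Submodule R (FractionRing R)) / I)) = 1

/-- The isomorphy class of the fractional `t`-ideal `I` is (von Neumann) regular in the
`t`-class semigroup `S_t(R)`: there are a fractional `t`-ideal `J` and a nonzero `c` in the
fraction field with `(I·I·J)_t = c I`, i.e. `x² a = x` for `x = [I]`, `a = [J]` in `S_t(R)`. -/
noncomputable def TClassRegular (I : Submodule R (FractionRing R)) : Prop :=
  ∃ J : Submodule R (FractionRing R), IsTFracIdeal R J ∧
    ∃ c : FractionRing R, c ≠ 0 ∧ tOp R (FractionRing R) (I * I * J) = c • I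

/-- `R` is Clifford `t`-regular: every element of `S_t(R)` is von Neumann regular. -/
noncomputable def IsCliffordTRegular : Prop :=
  ∀ I : Submodule R (FractionRing R), IsTFracIdeal R I → TClassRegular R I

/-- `R` is Boole `t`-regular: every element of `S_t(R)` is idempotent, i.e. `(I²)_t ≅ I`. -/
noncomputable def IsBooleTRegular : Prop :=
  ∀ I : Submodule R (FractionRing R), IsTFracIdeal R I →
    ∃ c : FractionRing R, c ≠ 0 ∧ tOp R (FractionRing R) (I * I) = c • I

/-- `R` is Clifford regular: every element of the class semigroup `S(R)` is regular. -/
def IsCliffordRegular : Prop :=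
  ∀ I : Submodule R (FractionRing R), IsFracIdeal R I →
    ∃ J : Submodule R (FractionRing R), IsFracIdeal R J ∧
      ∃ c : FractionRing R, c ≠ 0 ∧ I * I * J = c • I

/-- `R` is Boole regular: every element of the class semigroup `S(R)` is idempotent. -/
def IsBooleRegular : Prop :=
  ∀ I : Submodule R (FractionRing R), IsFracIdeal R I →
    ∃ c : FractionRing R, c ≠ 0 ∧ I * I = c • I

/-- `R` is a Prüfer `v`-multiplication domain: the localization at every `t`-maximal ideal is
a valuation domain. -/
noncomputable def IsPVMD [IsDomain R] : Prop :=
  ∀ M : Ideal R, ∀ hM : IsTMaximal R M,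
    haveI := hM.isPrime
    haveI : IsDomain (Localization.AtPrime M) :=
      IsLocalization.isDomain_of_local_atPrime hM.isPrime
    ValuationRing (Localization.AtPrime M)

/-- `R` is `t`-almost Dedekind: the localization at every `t`-maximal ideal is a rank-one
discrete valuation ring. -/
noncomputable def IsTAlmostDedekind [IsDomain R] : Prop :=
  ∀ M : Ideal R, ∀ hM : IsTMaximal R M,
    haveI := hM.isPrime
    haveI : IsDomain (Localization.AtPrime M) :=
      IsLocalization.isDomain_of_local_atPrime hM.isPrime
    IsDiscreteValuationRing (Localization.AtPrime M)

/-- `R` is strongly `t`-discrete: `(P²)_t ⊊ P` for every `t`-prime ideal `P`, i.e. there are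
no `t`-idempotent `t`-prime ideals. -/
noncomputable def IsStronglyTDiscrete : Prop :=
  ∀ P : Ideal R, IsTPrime R P →
    tOp R (FractionRing R) (idealToFrac R (P * P)) < idealToFrac R P

/-- `R` is completely integrally closed (in its fraction field). -/
def IsCompletelyIntegrallyClosed : Prop :=
  ∀ x : FractionRing R,
    (∃ c : R, c ≠ 0 ∧ ∀ n : ℕ, ∃ r : R,
      algebraMap R (FractionRing R) c * x ^ n = algebraMap R (FractionRing R) r) →
    ∃ r : R, algebraMap R (FractionRing R) r = x

/-- `R` is a Krull domain, via the classical characterization: every nonzero integral ideal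
is `t`-invertible. -/
noncomputable def IsKrull : Prop :=
  ∀ I : Ideal R, I ≠ ⊥ → IsTInvertible R (idealToFrac R I)

/-- `R` is a Prüfer domain: every nonzero finitely generated ideal is invertible. -/
noncomputable def IsPrufer : Prop :=
  ∀ I : Ideal R, I ≠ ⊥ → I.FG →
    idealToFrac R I * ((1 : Submodule R (FractionRing R)) / idealToFrac R I) = 1

/-- `R` has finite character: every nonzero nonunit lies in only finitely many maximal ideals. -/
def HasFiniteCharacter : Prop :=
  ∀ x : R, x ≠ 0 → ¬ IsUnit x → {M : Ideal R | M.IsMaximal ∧ x ∈ M}.Finite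

/-- `R` has finite `t`-character: every nonzero nonunit lies in only finitely many
`t`-maximal ideals. -/
noncomputable def HasFiniteTCharacter : Prop :=
  ∀ x : R, x ≠ 0 → ¬ IsUnit x → {M : Ideal R | IsTMaximal R M ∧ x ∈ M}.Finite

/-- A Krull-type domain: a PVMD of finite `t`-character. -/
noncomputable def IsKrullType [IsDomain R] : Prop :=
  IsPVMD R ∧ HasFiniteTCharacter R

/-- `R` is pseudo-integrally closed: `(I_t : I_t) = R` for every nonzero finitely generated
integral ideal `I` (equivalently, `R = ∪ (I_t : I_t)`). -/
noncomputable def IsPseudoIntegrallyClosed : Prop :=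
  ∀ I : Ideal R, I ≠ ⊥ → I.FG →
    tOp R (FractionRing R) (idealToFrac R I) / tOp R (FractionRing R) (idealToFrac R I) = 1

/-- The localization `I R_S` of a submodule `I` of the `R`-algebra `K` at a multiplicative
subset `S` of `R`, as a subset of `K`: the set of `x` with `s x ∈ I` for some `s ∈ S`. -/
def locSub (S : Submonoid R) {K : Type*} [CommRing K] [Algebra R K]
    (I : Submodule R K) : Submodule R K where
  carrier := {x : K | ∃ s ∈ S, (s : R) • x ∈ I}
  zero_mem' := ⟨1, S.one_mem, by simp⟩
  add_mem' := by
    rintro a b ⟨s, hs, ha⟩ ⟨t, ht, hb⟩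
    refine ⟨s * t, S.mul_mem hs ht, ?_⟩
    rw [smul_add]
    exact Submodule.add_mem _
      (by rw [mul_comm, mul_smul]; exact I.smul_mem t ha)
      (by rw [mul_smul]; exact I.smul_mem s hb)
  smul_mem' := by
    rintro r x ⟨s, hs, hx⟩
    exact ⟨s, hs, by rw [smul_comm]; exact I.smul_mem r hx⟩

/-- `M ∈ T_t(R)`: `M` is a `t`-maximal ideal such that `R_M` does not contain
`∩_{N ≠ M} R_N` (all viewed inside the fraction field). -/
noncomputable def InTt (M : Ideal R) : Prop :=
  ∃ hM : IsTMaximal R M,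
    ¬ ((⨅ N : {N : Ideal R // IsTMaximal R N ∧ N ≠ M},
          locSub R (@Ideal.primeCompl R _ N.1 N.2.1.isPrime)
            (1 : Submodule R (FractionRing R))) ≤
        locSub R (@Ideal.primeCompl R _ M hM.isPrime) (1 : Submodule R (FractionRing R)))

/-- The overring `(A : A)` of all multipliers of `A`, as a subalgebra of the fraction field. -/
noncomputable def stabRing (A : Submodule R (FractionRing R)) :
    Subalgebra R (FractionRing R) :=
  Submodule.toSubalgebra (A / A)
    (Submodule.mem_div_iff_forall_mul_mem.2 fun y hy => by rwa [one_mul])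
    (fun x y hx hy => Submodule.mem_div_iff_forall_mul_mem.2 fun z hz => by
      rw [mul_assoc]
      exact Submodule.mem_div_iff_forall_mul_mem.1 hx _
        (Submodule.mem_div_iff_forall_mul_mem.1 hy _ hz))


section AuxVT

variable {R₀ : Type*} [CommRing R₀] {K₀ : Type*} [CommRing K₀] [Algebra R₀ K₀]

theorem my_mem_psmul {a : K₀} {S : Submodule R₀ K₀} {m : K₀} :
    m ∈ a • S ↔ ∃ s ∈ S, a * s = m := by
  rw [← SetLike.mem_coe, Submodule.coe_pointwise_smul, Set.mem_smul_set]
  simp [smul_eq_mul]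

theorem my_le_one_div {I : Submodule R₀ K₀} (h : I ≤ 1) : (1 : Submodule R₀ K₀) ≤ 1 / I := by
  intro z hz
  exact Submodule.mem_div_iff_forall_mul_mem.2 fun y hy => by
    rcases Submodule.mem_one.1 hz with ⟨r, rfl⟩
    rcases Submodule.mem_one.1 (h hy) with ⟨s, rfl⟩
    exact Submodule.mem_one.2 ⟨r * s, by rw [map_mul]⟩

theorem my_one_div_anti {I J : Submodule R₀ K₀} (h : I ≤ J) :
    (1 : Submodule R₀ K₀) / J ≤ 1 / I := fun z hz =>
  Submodule.mem_div_iff_forall_mul_mem.2 fun y hy =>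
    Submodule.mem_div_iff_forall_mul_mem.1 hz y (h hy)

theorem my_le_vOp (I : Submodule R₀ K₀) : I ≤ vOp R₀ K₀ I := fun a ha =>
  Submodule.mem_div_iff_forall_mul_mem.2 fun y hy =>
    mul_comm y a ▸ Submodule.mem_div_iff_forall_mul_mem.1 hy a ha

theorem my_vOp_mono {I J : Submodule R₀ K₀} (h : I ≤ J) : vOp R₀ K₀ I ≤ vOp R₀ K₀ J :=
  my_one_div_anti (my_one_div_anti h)

theorem my_one_div_one_div_one_div (I : Submodule R₀ K₀) :
    1 / ((1 : Submodule R₀ K₀) / (1 / I)) = 1 / I :=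
  le_antisymm (my_one_div_anti (my_le_vOp I)) (my_le_vOp ((1 : Submodule R₀ K₀) / I))

theorem my_vOp_vOp (I : Submodule R₀ K₀) : vOp R₀ K₀ (vOp R₀ K₀ I) = vOp R₀ K₀ I := by
  show (1 : Submodule R₀ K₀) / (1 / (1 / (1 / I))) = 1 / (1 / I)
  rw [my_one_div_one_div_one_div]

theorem my_vOp_le_one {I : Submodule R₀ K₀} (h : I ≤ 1) : vOp R₀ K₀ I ≤ 1 := by
  intro z hz
  have h1 : (1 : K₀) ∈ (1 : Submodule R₀ K₀) / I :=
    my_le_one_div h (Submodule.mem_one.2 ⟨1, map_one _⟩)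
  simpa using Submodule.mem_div_iff_forall_mul_mem.1 hz 1 h1

theorem my_le_tOp (I : Submodule R₀ K₀) : I ≤ tOp R₀ K₀ I := by
  intro a ha
  by_cases h0 : a = 0
  · exact h0 ▸ Submodule.zero_mem _
  · have hmem : Submodule.span R₀ {a} ∈ {J : Submodule R₀ K₀ | J ≠ ⊥ ∧ J.FG ∧ J ≤ I} :=
      ⟨by simpa [Submodule.span_singleton_eq_bot] using h0, Submodule.fg_span_singleton a,
        (Submodule.span_singleton_le_iff_mem a I).2 ha⟩
    have : a ∈ vOp R₀ K₀ (Submodule.span R₀ {a}) :=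
      my_le_vOp _ (Submodule.mem_span_singleton_self a)
    exact le_iSup₂ (f := fun J _ => vOp R₀ K₀ J) (Submodule.span R₀ {a}) hmem this

theorem my_tOp_le_one {I : Submodule R₀ K₀} (h : I ≤ 1) : tOp R₀ K₀ I ≤ 1 :=
  iSup₂_le fun _J hJ => my_vOp_le_one (hJ.2.2.trans h)

theorem my_mem_tOp {I : Submodule R₀ K₀} {z : K₀} (hz : z ∈ tOp R₀ K₀ I) :
    z = 0 ∨ ∃ J : Submodule R₀ K₀, J ≠ ⊥ ∧ J.FG ∧ J ≤ I ∧ z ∈ vOp R₀ K₀ J := by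
  by_cases hne : {J : Submodule R₀ K₀ | J ≠ ⊥ ∧ J.FG ∧ J ≤ I}.Nonempty
  · haveI : Nonempty {J : Submodule R₀ K₀ // J ∈ {J : Submodule R₀ K₀ | J ≠ ⊥ ∧ J.FG ∧ J ≤ I}} :=
      hne.to_subtype
    have hdir : Directed (· ≤ ·)
        (fun J : {J : Submodule R₀ K₀ // J ∈ {J : Submodule R₀ K₀ | J ≠ ⊥ ∧ J.FG ∧ J ≤ I}} =>
          vOp R₀ K₀ J.1) := by
      rintro ⟨J₁, hb₁, hf₁, hl₁⟩ ⟨J₂, hb₂, hf₂, hl₂⟩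
      refine ⟨⟨J₁ ⊔ J₂, ?_, hf₁.sup hf₂, sup_le hl₁ hl₂⟩, ?_, ?_⟩
      · intro hbot
        exact hb₁ (le_bot_iff.1 (hbot ▸ le_sup_left))
      · exact my_vOp_mono le_sup_left
      · exact my_vOp_mono le_sup_right
    have : z ∈ ⨆ J : {J : Submodule R₀ K₀ // J ∈ {J : Submodule R₀ K₀ | J ≠ ⊥ ∧ J.FG ∧ J ≤ I}},
        vOp R₀ K₀ J.1 := by
      rwa [tOp, iSup_subtype'] at hz
    rcases (Submodule.mem_iSup_of_directed _ hdir).1 this with ⟨⟨J, hJ⟩, hzJ⟩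
    exact Or.inr ⟨J, hJ.1, hJ.2.1, hJ.2.2, hzJ⟩
  · left
    have : tOp R₀ K₀ I ≤ ⊥ := iSup₂_le fun J hJ => absurd ⟨J, hJ⟩ hne
    simpa using this hz

theorem my_tOp_tOp (I : Submodule R₀ K₀) : tOp R₀ K₀ (tOp R₀ K₀ I) = tOp R₀ K₀ I := by
  refine le_antisymm ?_ (my_le_tOp _)
  refine iSup₂_le ?_
  rintro J ⟨hJbot, hJfg, hJle⟩
  rcases hJfg with ⟨T, hT⟩
  -- I is nonzero
  have hIne : I ≠ ⊥ := by
    rintro rfl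
    have : tOp R₀ K₀ (⊥ : Submodule R₀ K₀) ≤ ⊥ := by
      refine iSup₂_le ?_
      rintro J' ⟨hb', _, hl'⟩
      exact absurd (le_bot_iff.1 hl') hb'
    exact hJbot (le_bot_iff.1 (hJle.trans this))
  rcases (Submodule.ne_bot_iff I).1 hIne with ⟨a₀, ha₀I, ha₀⟩
  have key : ∀ g ∈ T, ∃ H : Submodule R₀ K₀, H.FG ∧ H ≤ I ∧ g ∈ vOp R₀ K₀ H := by
    intro g hg
    have hgt : g ∈ tOp R₀ K₀ I := hJle (hT ▸ Submodule.subset_span hg)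
    rcases my_mem_tOp hgt with h0 | ⟨H, _, hf, hl, hm⟩
    · exact ⟨⊥, Submodule.fg_bot, bot_le, h0 ▸ Submodule.zero_mem _⟩
    · exact ⟨H, hf, hl, hm⟩
  choose! f hf1 hf2 hf3 using key
  set H : Submodule R₀ K₀ := T.sup f ⊔ Submodule.span R₀ {a₀} with hH
  have hHfg : H.FG := (Submodule.fg_finset_sup T f fun g hg => hf1 g hg).sup
    (Submodule.fg_span_singleton a₀)
  have hHle : H ≤ I := sup_le (Finset.sup_le fun g hg => hf2 g hg)
    ((Submodule.span_singleton_le_iff_mem a₀ I).2 ha₀I)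
  have hHbot : H ≠ ⊥ := by
    intro hbot
    have : Submodule.span R₀ {a₀} ≤ ⊥ := hbot ▸ le_sup_right
    exact ha₀ (by simpa [Submodule.span_singleton_eq_bot] using le_bot_iff.1 this)
  have hJH : J ≤ vOp R₀ K₀ H := by
    rw [← hT, Submodule.span_le]
    intro g hg
    exact my_vOp_mono (le_trans (Finset.le_sup hg) le_sup_left) (hf3 g hg)
  have : vOp R₀ K₀ J ≤ vOp R₀ K₀ H := by
    calc vOp R₀ K₀ J ≤ vOp R₀ K₀ (vOp R₀ K₀ H) := my_vOp_mono hJH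
    _ = vOp R₀ K₀ H := my_vOp_vOp H
  exact this.trans (le_iSup₂ (f := fun J _ => vOp R₀ K₀ J) H ⟨hHbot, hHfg, hHle⟩)

end AuxVT
section AuxVT2

variable {R₀ : Type*} [CommRing R₀] {K₀ : Type*} [CommRing K₀] [Algebra R₀ K₀]

theorem my_one_mul_mem {g₁ g₂ : K₀} (h₁ : g₁ ∈ (1 : Submodule R₀ K₀))
    (h₂ : g₂ ∈ (1 : Submodule R₀ K₀)) : g₁ * g₂ ∈ (1 : Submodule R₀ K₀) := by
  rcases Submodule.mem_one.1 h₁ with ⟨r, rfl⟩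
  rcases Submodule.mem_one.1 h₂ with ⟨s, rfl⟩
  exact Submodule.mem_one.2 ⟨r * s, by rw [map_mul]⟩

theorem my_mem_one_div_span_pair {a b z : K₀} (ha : z * a ∈ (1 : Submodule R₀ K₀))
    (hb : z * b ∈ (1 : Submodule R₀ K₀)) :
    z ∈ (1 : Submodule R₀ K₀) / Submodule.span R₀ {a, b} := by
  refine Submodule.mem_div_iff_forall_mul_mem.2 fun y hy => ?_
  induction hy using Submodule.span_induction with
  | mem y hmem =>
    rcases hmem with h | h
    · rwa [h]
    · rw [Set.mem_singleton_iff] at h; rwa [h]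
  | zero => simpa using Submodule.zero_mem (1 : Submodule R₀ K₀)
  | add y₁ y₂ _ _ h₁ h₂ => rw [mul_add]; exact Submodule.add_mem _ h₁ h₂
  | smul r y _ h => rw [mul_smul_comm]; exact Submodule.smul_mem _ r h

end AuxVT2
set_option maxHeartbeats 2000000 in
/-- **Lemma 3.10.** Let `R` be a PVMD which is Clifford `t`-regular and `M` a `t`-maximal
ideal of `R`. Then `M ∈ T_t(R)` iff `M` strictly contains `∪_N (M ∧ N)`, `N` ranging over
the `t`-maximal ideals distinct from `M` and `M ∧ N` denoting the largest prime ideal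
contained in `M ∩ N`; i.e., iff some `x ∈ M` lies in no prime ideal contained in any `M ⊓ N`. -/
theorem inTt_iff_strictly_contains_union (R : Type*) [CommRing R] [IsDomain R]
    (hR : IsPVMD R) (hC : IsCliffordTRegular R) (M : Ideal R) (hM : IsTMaximal R M) :
    InTt R M ↔ ∃ x ∈ M, ∀ N : Ideal R, IsTMaximal R N → N ≠ M →
      ∀ P : Ideal R, P.IsPrime → P ≤ M ⊓ N → x ∉ P := by
  have hinj := IsFractionRing.injective R (FractionRing R)
  constructor
  · rintro ⟨hM', hns⟩
    obtain ⟨y, hyI, hyM⟩ := SetLike.not_le_iff_exists.1 hns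
    obtain ⟨⟨a, b⟩, hab⟩ := IsLocalization.surj (nonZeroDivisors R) y
    dsimp only at hab
    haveI hMp := hM'.isPrime
    haveI : IsDomain (Localization.AtPrime M) :=
      IsLocalization.isDomain_of_local_atPrime hM'.isPrime
    haveI hVR : ValuationRing (Localization.AtPrime M) := hR M hM'
    have halgb : (algebraMap R (FractionRing R)) (b : R) ≠ 0 :=
      IsFractionRing.to_map_ne_zero_of_mem_nonZeroDivisors b.2
    obtain ⟨γ, hγ⟩ := ValuationRing.cond (algebraMap R (Localization.AtPrime M) a)
      (algebraMap R (Localization.AtPrime M) (b : R))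
    obtain ⟨⟨r, u⟩, hru⟩ := IsLocalization.surj M.primeCompl γ
    dsimp only at hru
    rcases hγ with hγ | hγ
    · -- a * γ = b : then y⁻¹ "=" u₁/r₁ with r₁ ∈ M
      have h1 : algebraMap R (Localization.AtPrime M) (a * r) =
          algebraMap R (Localization.AtPrime M) ((b : R) * u) := by
        rw [map_mul, map_mul, ← hru, ← mul_assoc, hγ]
      rcases (IsLocalization.eq_iff_exists M.primeCompl (Localization.AtPrime M)).1 h1
        with ⟨cc, hcc⟩
      have hu₁ : (cc : R) * (u : R) ∉ M := M.primeCompl.mul_mem cc.2 u.2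
      have hbru : a * ((cc : R) * r) = (b : R) * ((cc : R) * (u : R)) := by
        linear_combination hcc
      have hyr₁ : y * algebraMap R (FractionRing R) ((cc : R) * r) =
          algebraMap R (FractionRing R) ((cc : R) * (u : R)) := by
        apply mul_left_cancel₀ halgb
        calc algebraMap R (FractionRing R) (b : R) *
              (y * algebraMap R (FractionRing R) ((cc : R) * r))
            = (y * algebraMap R (FractionRing R) (b : R)) *
              algebraMap R (FractionRing R) ((cc : R) * r) := by ring
          _ = algebraMap R (FractionRing R) (a * ((cc : R) * r)) := by rw [hab]; simp [map_mul]
          _ = algebraMap R (FractionRing R) ((b : R) * ((cc : R) * (u : R))) := by rw [hbru]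
          _ = _ := by simp [map_mul]
      have hr₁M : (cc : R) * r ∈ M := by
        by_contra hr₁
        exact hyM ⟨(cc : R) * r, hr₁, Submodule.mem_one.2
          ⟨(cc : R) * (u : R), by rw [Algebra.smul_def, ← hyr₁]; ring⟩⟩
      refine ⟨(cc : R) * r, hr₁M, fun N hN hNM P hP hPle hr₁P => ?_⟩
      have hyN : y ∈ locSub R (@Ideal.primeCompl R _ N hN.isPrime)
          (1 : Submodule R (FractionRing R)) := (Submodule.mem_iInf _).mp hyI ⟨N, hN, hNM⟩
      obtain ⟨q, hq, hqy⟩ := hyN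
      rcases Submodule.mem_one.1 hqy with ⟨e, he⟩
      have hqu : q * ((cc : R) * (u : R)) = e * ((cc : R) * r) := by
        apply hinj
        calc algebraMap R (FractionRing R) (q * ((cc : R) * (u : R)))
            = algebraMap R (FractionRing R) q *
                algebraMap R (FractionRing R) ((cc : R) * (u : R)) := by rw [map_mul]
          _ = algebraMap R (FractionRing R) q *
                (y * algebraMap R (FractionRing R) ((cc : R) * r)) := by rw [hyr₁]
          _ = (q • y) * algebraMap R (FractionRing R) ((cc : R) * r) := by
                rw [Algebra.smul_def]; ring
          _ = algebraMap R (FractionRing R) e *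
                algebraMap R (FractionRing R) ((cc : R) * r) := by rw [he]
          _ = _ := by simp [map_mul]
      have hmem : q * ((cc : R) * (u : R)) ∈ P := hqu ▸ P.mul_mem_left e hr₁P
      rcases hP.mem_or_mem hmem with h | h
      · exact hq (hPle.trans inf_le_right h)
      · exact hu₁ (hPle.trans inf_le_left h)
    · -- b * γ = a : then y ∈ R_M, contradiction
      exfalso
      have h1 : algebraMap R (Localization.AtPrime M) ((b : R) * r) =
          algebraMap R (Localization.AtPrime M) (a * u) := by
        rw [map_mul, map_mul, ← hru, ← mul_assoc, hγ]
      rcases (IsLocalization.eq_iff_exists M.primeCompl (Localization.AtPrime M)).1 h1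
        with ⟨cc, hcc⟩
      have hu₂ : (cc : R) * (u : R) ∉ M := M.primeCompl.mul_mem cc.2 u.2
      have hbru : (b : R) * ((cc : R) * r) = a * ((cc : R) * (u : R)) := by
        linear_combination hcc
      have hyu₂ : y * algebraMap R (FractionRing R) ((cc : R) * (u : R)) =
          algebraMap R (FractionRing R) ((cc : R) * r) := by
        apply mul_left_cancel₀ halgb
        calc algebraMap R (FractionRing R) (b : R) *
              (y * algebraMap R (FractionRing R) ((cc : R) * (u : R)))
            = (y * algebraMap R (FractionRing R) (b : R)) *
              algebraMap R (FractionRing R) ((cc : R) * (u : R)) := by ring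
          _ = algebraMap R (FractionRing R) (a * ((cc : R) * (u : R))) := by rw [hab]; simp [map_mul]
          _ = algebraMap R (FractionRing R) ((b : R) * ((cc : R) * r)) := by rw [← hbru]
          _ = _ := by simp [map_mul]
      exact hyM ⟨(cc : R) * (u : R), hu₂, Submodule.mem_one.2
        ⟨(cc : R) * r, by rw [Algebra.smul_def, ← hyu₂]; ring⟩⟩
  · rintro ⟨x, hxM, hx⟩
    refine ⟨hM, fun hle => ?_⟩
    by_cases hx0 : x = 0
    · -- then there is no other t-maximal ideal; contradict hle with 1/x₀
      obtain ⟨x₀, hx₀M, hx₀⟩ := (Submodule.ne_bot_iff M).1 hM.ne_bot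
      have halg : algebraMap R (FractionRing R) x₀ ≠ 0 := by
        simpa using fun h => hx₀ (hinj (by simpa using h))
      have hy : ((algebraMap R (FractionRing R) x₀)⁻¹ : FractionRing R) ∈
          ⨅ N : {N : Ideal R // IsTMaximal R N ∧ N ≠ M},
            locSub R (@Ideal.primeCompl R _ N.1 N.2.1.isPrime)
              (1 : Submodule R (FractionRing R)) := by
        refine (Submodule.mem_iInf _).2 fun N => ?_
        exact absurd (by simp [hx0] : x ∈ (⊥ : Ideal R))
          (hx N.1 N.2.1 N.2.2 ⊥ Ideal.bot_prime bot_le)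
      obtain ⟨s, hs, hsy⟩ := hle hy
      rcases Submodule.mem_one.1 hsy with ⟨r, hr⟩
      have : r * x₀ = s := by
        apply hinj
        rw [map_mul]
        calc algebraMap R (FractionRing R) r * algebraMap R (FractionRing R) x₀
            = (s • (algebraMap R (FractionRing R) x₀)⁻¹) *
              algebraMap R (FractionRing R) x₀ := by rw [hr]
          _ = algebraMap R (FractionRing R) s *
              ((algebraMap R (FractionRing R) x₀)⁻¹ * algebraMap R (FractionRing R) x₀) := by
                rw [Algebra.smul_def]; ring
          _ = algebraMap R (FractionRing R) s := by rw [inv_mul_cancel₀ halg, mul_one]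
      exact hs (this ▸ M.mul_mem_left r hx₀M)
    · -- main case
      have hξ : algebraMap R (FractionRing R) x ≠ 0 := by
        simpa using fun h => hx0 (hinj (by simpa using h))
      have h1M : (1 : R) ∉ M := (Ideal.ne_top_iff_one M).1 hM.ne_top
      have hmulM : ∀ a b : R, a ∉ M → b ∉ M → a * b ∉ M := fun a b ha hb h =>
        (hM.isPrime.mem_or_mem h).elim ha hb
      -- every s ∉ M fails to be in x·R_N for some t-maximal N ≠ M
      have hBad : ∀ s : R, s ∉ M → ∃ N : Ideal R, ∃ _hN : IsTMaximal R N, N ≠ M ∧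
          ∀ u, u ∉ N → ∀ r : R, u * s ≠ x * r := by
        intro s hs
        by_contra hcon
        push_neg at hcon
        have hyI : (algebraMap R (FractionRing R) s / algebraMap R (FractionRing R) x) ∈
            ⨅ N : {N : Ideal R // IsTMaximal R N ∧ N ≠ M},
              locSub R (@Ideal.primeCompl R _ N.1 N.2.1.isPrime)
                (1 : Submodule R (FractionRing R)) := by
          refine (Submodule.mem_iInf _).2 ?_
          rintro ⟨N, hN, hNM⟩
          obtain ⟨u, huN, r, hur⟩ := hcon N hN hNM
          refine ⟨u, huN, Submodule.mem_one.2 ⟨r, ?_⟩⟩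
          have heq2 : algebraMap R (FractionRing R) u * (algebraMap R (FractionRing R) s /
              algebraMap R (FractionRing R) x) = algebraMap R (FractionRing R) r := by
            rw [← mul_div_assoc, ← map_mul, hur, map_mul]
            exact mul_div_cancel_left₀ _ hξ
          rw [Algebra.smul_def, heq2]
        obtain ⟨w, hw, hwy⟩ := hle hyI
        rcases Submodule.mem_one.1 hwy with ⟨r', hr'⟩
        have : w * s = x * r' := by
          apply hinj
          rw [map_mul, map_mul]
          calc algebraMap R (FractionRing R) w * algebraMap R (FractionRing R) s
              = (w • (algebraMap R (FractionRing R) s / algebraMap R (FractionRing R) x)) *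
                algebraMap R (FractionRing R) x := by
                  rw [Algebra.smul_def]; field_simp
          _ = algebraMap R (FractionRing R) r' * algebraMap R (FractionRing R) x := by rw [hr']
          _ = algebraMap R (FractionRing R) x * algebraMap R (FractionRing R) r' := by ring
        exact hmulM w s hw hs (this ▸ M.mul_mem_right r' hxM)
      -- for every t-maximal N ≠ M there are s ∉ M, u ∉ N with u·s ∈ x·R
      have hStepB : ∀ N : Ideal R, IsTMaximal R N → N ≠ M →
          ∃ s u r : R, s ∉ M ∧ u ∉ N ∧ u * s = x * r := by
        intro N hN hNM
        by_cases hxN : x ∈ N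
        · haveI hNp := hN.isPrime
          haveI : IsDomain (Localization.AtPrime N) :=
            IsLocalization.isDomain_of_local_atPrime hN.isPrime
          haveI hVR : ValuationRing (Localization.AtPrime N) := hR N hN
          set L := Localization.AtPrime N with hLdef
          have htot : ∀ a b : L, a ∣ b ∨ b ∣ a := by
            intro a b
            rcases ValuationRing.cond a b with ⟨d, hd | hd⟩
            · exact Or.inl ⟨d, hd.symm⟩
            · exact Or.inr ⟨d, hd.symm⟩
          have hspan_le : Ideal.span {algebraMap R L x} ≤ IsLocalRing.maximalIdeal L := by
            rw [Ideal.span_le, Set.singleton_subset_iff]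
            exact (IsLocalization.AtPrime.to_map_mem_maximal_iff L N x).2 hxN
          have hmaxrad : (IsLocalRing.maximalIdeal L).radical = IsLocalRing.maximalIdeal L :=
            ((IsLocalRing.maximalIdeal.isMaximal L).isPrime).radical
          have hQ'le : (Ideal.span {algebraMap R L x}).radical ≤ IsLocalRing.maximalIdeal L :=
            hmaxrad ▸ Ideal.radical_mono hspan_le
          have hQ'prime : (Ideal.span {algebraMap R L x}).radical.IsPrime := by
            constructor
            · intro htop
              exact (Ideal.ne_top_iff_one _).1 (IsLocalRing.maximalIdeal.isMaximal L).ne_top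
                (hQ'le (htop ▸ Submodule.mem_top))
            · intro a b hab
              rcases htot a b with ⟨d, hd⟩ | ⟨d, hd⟩
              · refine Or.inr (Ideal.mem_radical_of_pow_mem (m := 2) ?_)
                have : b ^ 2 = (a * b) * d := by rw [hd]; ring
                exact this ▸ Ideal.mul_mem_right d _ hab
              · refine Or.inl (Ideal.mem_radical_of_pow_mem (m := 2) ?_)
                have : a ^ 2 = (a * b) * d := by rw [hd]; ring
                exact this ▸ Ideal.mul_mem_right d _ hab
          have hQprime : (Ideal.comap (algebraMap R L)
              (Ideal.span {algebraMap R L x}).radical).IsPrime :=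
            Ideal.IsPrime.comap _ (hK := hQ'prime)
          have hxQ : x ∈ Ideal.comap (algebraMap R L) (Ideal.span {algebraMap R L x}).radical :=
            Ideal.le_radical (Ideal.mem_span_singleton_self _)
          have hQN : Ideal.comap (algebraMap R L) (Ideal.span {algebraMap R L x}).radical ≤ N := by
            intro z hz
            exact (IsLocalization.AtPrime.to_map_mem_maximal_iff L N z).1 (hQ'le hz)
          have hQM : ¬ Ideal.comap (algebraMap R L) (Ideal.span {algebraMap R L x}).radical ≤ M :=
            fun hQM' => hx N hN hNM _ hQprime (le_inf hQM' hQN) hxQ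
          obtain ⟨s', hs'Q, hs'M⟩ := SetLike.not_le_iff_exists.1 hQM
          rcases hs'Q with ⟨n, hn⟩
          rcases Ideal.mem_span_singleton.1 hn with ⟨ℓ, hℓ⟩
          obtain ⟨⟨r, u⟩, hru⟩ := IsLocalization.surj N.primeCompl ℓ
          dsimp only at hru
          have heqL : algebraMap R L (s' ^ n * u) = algebraMap R L (x * r) := by
            rw [map_mul, map_mul, map_pow, hℓ, mul_assoc, hru]
          rcases (IsLocalization.eq_iff_exists N.primeCompl L).1 heqL with ⟨cc, hcc⟩
          refine ⟨s' ^ n, (cc : R) * (u : R), (cc : R) * r, ?_, ?_, ?_⟩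
          · exact fun h => hs'M (hM.isPrime.mem_of_pow_mem n h)
          · exact N.primeCompl.mul_mem cc.2 u.2
          · linear_combination hcc
        · exact ⟨1, x, 1, h1M, hxN, by ring⟩
      -- recursive construction of stages
      have key : ∀ t : {t : R // t ∉ M}, ∃ q : Ideal R × R × R,
          ∃ _hN : IsTMaximal R q.1, q.1 ≠ M ∧
          (∀ u', u' ∉ q.1 → ∀ r', u' * (t.1 * t.1) ≠ x * r') ∧
          q.2.1 ∉ M ∧ q.2.2 ∉ q.1 ∧ ∃ r : R, q.2.2 * q.2.1 = x * r := by
        rintro ⟨t, ht⟩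
        obtain ⟨N, hN, hNM, hprop⟩ := hBad (t * t) (hmulM t t ht ht)
        obtain ⟨s, u, r, hsM, huN, hur⟩ := hStepB N hN hNM
        exact ⟨⟨N, s, u⟩, hN, hNM, hprop, hsM, huN, r, hur⟩
      choose step hstep1 hstep2 hstep3 hstep4 hstep5 hstep6 using key
      let f : ℕ → {t : R // t ∉ M} := fun n => Nat.rec ⟨1, h1M⟩
        (fun _ p => ⟨p.1 * (step p).2.1, hmulM _ _ p.2 (hstep4 p)⟩) n
      set σ : ℕ → R := fun n => (step (f n)).2.1 with hσdef
      set 𝒩 : ℕ → Ideal R := fun n => (step (f n)).1 with h𝒩def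
      set υ : ℕ → R := fun n => (step (f n)).2.2 with hυdef
      have hfsucc : ∀ n, (f (n + 1)).1 = (f n).1 * σ n := fun n => rfl
      have hdvd : ∀ n m, n < m → σ n ∣ (f m).1 := by
        intro n m hnm
        induction m with
        | zero => omega
        | succ m ih =>
          rcases Nat.lt_succ_iff_lt_or_eq.1 hnm with h | h
          · rw [hfsucc m]; exact (ih h).mul_right _
          · subst h; rw [hfsucc n]; exact Dvd.intro_left _ rfl
      set ξ : FractionRing R := algebraMap R (FractionRing R) x with hξdef
      let G : ℕ → Submodule R (FractionRing R) := fun n =>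
        Submodule.span R {ξ, algebraMap R (FractionRing R) (σ n)}
      let E : ℕ → Submodule R (FractionRing R) := fun n =>
        ξ • ((1 : Submodule R (FractionRing R)) / G n)
      let I : Submodule R (FractionRing R) := ⨆ n, E n
      have hG_le_one : ∀ n, G n ≤ 1 := by
        intro n
        rw [Submodule.span_le]
        rintro z (rfl | hz)
        · exact Submodule.mem_one.2 ⟨x, rfl⟩
        · rw [Set.mem_singleton_iff] at hz; subst hz
          exact Submodule.mem_one.2 ⟨σ n, rfl⟩
      have hE_le_one : ∀ n, E n ≤ 1 := by
        intro n z hz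
        rcases my_mem_psmul.1 hz with ⟨w, hw, rfl⟩
        have := Submodule.mem_div_iff_forall_mul_mem.1 hw ξ
          (Submodule.subset_span (Set.mem_insert _ _))
        rwa [mul_comm] at this
      have hI_le_one : I ≤ 1 := iSup_le hE_le_one
      have hξE : ∀ n, ξ ∈ E n := fun n =>
        my_mem_psmul.2 ⟨1, my_le_one_div (hG_le_one n) (Submodule.mem_one.2 ⟨1, map_one _⟩),
          mul_one ξ⟩
      have hυE : ∀ n, algebraMap R (FractionRing R) (υ n) ∈ E n := by
        intro n
        refine my_mem_psmul.2 ⟨algebraMap R (FractionRing R) (υ n) / ξ, ?_, ?_⟩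
        · refine my_mem_one_div_span_pair ?_ ?_
          · rw [div_mul_cancel₀ _ hξ]
            exact Submodule.mem_one.2 ⟨υ n, rfl⟩
          · obtain ⟨r, hr⟩ := hstep6 (f n)
            have hmul : algebraMap R (FractionRing R) (υ n) * algebraMap R (FractionRing R) (σ n)
                = ξ * algebraMap R (FractionRing R) r := by
              rw [hξdef, ← map_mul, ← map_mul, hr]
            rw [div_mul_eq_mul_div, hmul, mul_div_cancel_left₀ _ hξ]
            exact Submodule.mem_one.2 ⟨r, rfl⟩
        · rw [mul_comm, div_mul_cancel₀ _ hξ]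
      set It : Submodule R (FractionRing R) := tOp R (FractionRing R) I with hItdef
      have hItone : It ≤ 1 := my_tOp_le_one hI_le_one
      have hξIt : ξ ∈ It := my_le_tOp I (le_iSup E 0 (hξE 0))
      have hItfrac : IsTFracIdeal R It := by
        refine ⟨⟨?_, ⟨1, one_mem _, fun b hb => ?_⟩⟩, my_tOp_tOp I⟩
        · intro hbot
          have hξbot : ξ ∈ (⊥ : Submodule R (FractionRing R)) := hbot ▸ hξIt
          exact hξ (by simpa using hξbot)
        · rcases Submodule.mem_one.1 (hItone hb) with ⟨r, hr⟩
          exact ⟨r, by simpa using hr⟩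
      obtain ⟨J, hJfrac, c, hc0, heqt⟩ := hC It hItfrac
      have hEτ : ∀ n m', n < m' → ∀ e ∈ E n,
          algebraMap R (FractionRing R) ((f m').1) * e ∈
            ξ • (1 : Submodule R (FractionRing R)) := by
        intro n m' hnm e he
        rcases my_mem_psmul.1 he with ⟨w, hw, rfl⟩
        obtain ⟨d, hd⟩ := hdvd n m' hnm
        have h1 : algebraMap R (FractionRing R) (σ n) * w ∈ (1 : Submodule R (FractionRing R)) := by
          rw [mul_comm]
          exact Submodule.mem_div_iff_forall_mul_mem.1 hw _
            (Submodule.subset_span (Set.mem_insert_of_mem _ rfl))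
        refine my_mem_psmul.2 ⟨algebraMap R (FractionRing R) d *
          (algebraMap R (FractionRing R) (σ n) * w), ?_, ?_⟩
        · rw [← Algebra.smul_def]
          exact Submodule.smul_mem _ d h1
        · rw [hd, map_mul]; ring
      have hz_lemma : ∀ z ∈ It, ∃ m : ℕ, ∀ m' ≥ m,
          algebraMap R (FractionRing R) ((f m').1) * z ∈
            ξ • (1 : Submodule R (FractionRing R)) := by
        intro z hz
        rcases my_mem_tOp hz with rfl | ⟨J', hJ'b, hJ'fg, hJ'le, hv⟩
        · exact ⟨0, fun m' _ => by rw [mul_zero]; exact Submodule.zero_mem _⟩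
        · rcases hJ'fg with ⟨T', hT'⟩
          have hgen : ∀ g ∈ T', ∃ mg : ℕ, ∀ m' ≥ mg,
              algebraMap R (FractionRing R) ((f m').1) * g ∈
                ξ • (1 : Submodule R (FractionRing R)) := by
            intro g hg
            have hgI : g ∈ I := hJ'le (hT' ▸ Submodule.subset_span hg)
            rcases Submodule.mem_iSup_iff_exists_finset.1 hgI with ⟨sg, hsg⟩
            refine ⟨sg.sup id + 1, fun m' hm' => ?_⟩
            have hle2 : (⨆ n ∈ sg, E n) ≤ Submodule.comap
                (LinearMap.mulLeft R (algebraMap R (FractionRing R) ((f m').1)))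
                (ξ • (1 : Submodule R (FractionRing R))) := by
              refine iSup₂_le fun n hn => ?_
              intro e he
              have hnm : n < m' :=
                lt_of_lt_of_le (Nat.lt_succ_of_le (Finset.le_sup (f := id) hn)) hm'
              exact hEτ n m' hnm e he
            exact hle2 hsg
          choose! mg hmg using hgen
          refine ⟨T'.sup mg, fun m' hm' => ?_⟩
          have hdivmem : algebraMap R (FractionRing R) ((f m').1) / ξ ∈
              (1 : Submodule R (FractionRing R)) / J' := by
            refine Submodule.mem_div_iff_forall_mul_mem.2 fun e hemem => ?_
            have heD : algebraMap R (FractionRing R) ((f m').1) * e ∈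
                ξ • (1 : Submodule R (FractionRing R)) := by
              have hJ'D : J' ≤ Submodule.comap
                  (LinearMap.mulLeft R (algebraMap R (FractionRing R) ((f m').1)))
                  (ξ • (1 : Submodule R (FractionRing R))) := by
                rw [← hT', Submodule.span_le]
                intro g hg
                exact hmg g hg m' (le_trans (Finset.le_sup hg) hm')
              exact hJ'D hemem
            rcases my_mem_psmul.1 heD with ⟨w, hw, hweq⟩
            have heq3 : algebraMap R (FractionRing R) ((f m').1) / ξ * e = w := by
              rw [div_mul_eq_mul_div, ← hweq, mul_div_cancel_left₀ _ hξ]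
            rwa [heq3]
          have hmul := Submodule.mem_div_iff_forall_mul_mem.1 hv _ hdivmem
          refine my_mem_psmul.2 ⟨z * (algebraMap R (FractionRing R) ((f m').1) / ξ), hmul, ?_⟩
          field_simp
      have hD1 : ∀ w ∈ J, ∀ k : ℕ,
          algebraMap R (FractionRing R) (υ k) * algebraMap R (FractionRing R) (υ k) * w ∈
            c • (1 : Submodule R (FractionRing R)) := by
        intro w hw k
        have h1 : algebraMap R (FractionRing R) (υ k) ∈ It := my_le_tOp I (le_iSup E k (hυE k))
        have h2 := Submodule.mul_mem_mul (Submodule.mul_mem_mul h1 h1) hw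
        have h3 := my_le_tOp (It * It * J) h2
        rw [heqt] at h3
        rcases my_mem_psmul.1 h3 with ⟨ζ, hζ, hζeq⟩
        exact my_mem_psmul.2 ⟨ζ, hItone hζ, hζeq⟩
      have hz2 : ∀ z ∈ It * It, ∃ m : ℕ, ∀ m' ≥ m,
          algebraMap R (FractionRing R) ((f m').1 * (f m').1) * z ∈
            (ξ * ξ) • (1 : Submodule R (FractionRing R)) := by
        intro z hz
        refine Submodule.mul_induction_on hz ?_ ?_
        · intro z₁ h₁ z₂ h₂
          obtain ⟨m₁, hm₁⟩ := hz_lemma z₁ h₁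
          obtain ⟨m₂, hm₂⟩ := hz_lemma z₂ h₂
          refine ⟨max m₁ m₂, fun m' hm' => ?_⟩
          rcases my_mem_psmul.1 (hm₁ m' (le_trans (le_max_left _ _) hm')) with ⟨g₁, hg₁, he₁⟩
          rcases my_mem_psmul.1 (hm₂ m' (le_trans (le_max_right _ _) hm')) with ⟨g₂, hg₂, he₂⟩
          refine my_mem_psmul.2 ⟨g₁ * g₂, my_one_mul_mem hg₁ hg₂, ?_⟩
          have h12 : ξ * ξ * (g₁ * g₂) = (algebraMap R (FractionRing R) ((f m').1) * z₁) *
              (algebraMap R (FractionRing R) ((f m').1) * z₂) := by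
            calc ξ * ξ * (g₁ * g₂) = (ξ * g₁) * (ξ * g₂) := by ring
              _ = _ := by rw [he₁, he₂]
          rw [h12]
          simp only [map_mul]
          ring
        · rintro z₁ z₂ ⟨m₁, h₁⟩ ⟨m₂, h₂⟩
          refine ⟨max m₁ m₂, fun m' hm' => ?_⟩
          rw [mul_add]
          exact Submodule.add_mem _ (h₁ m' (le_trans (le_max_left _ _) hm'))
            (h₂ m' (le_trans (le_max_right _ _) hm'))
      have hC3 : ∀ h ∈ It * It * J, ∃ m : ℕ, ∀ m' ≥ m, ∀ k : ℕ,
          algebraMap R (FractionRing R) ((f m').1 * (f m').1 * (υ k * υ k)) * h ∈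
            (c * (ξ * ξ)) • (1 : Submodule R (FractionRing R)) := by
        intro h hh
        refine Submodule.mul_induction_on hh ?_ ?_
        · intro z hz w hw
          obtain ⟨m, hm⟩ := hz2 z hz
          refine ⟨m, fun m' hm' k => ?_⟩
          rcases my_mem_psmul.1 (hm m' hm') with ⟨g, hg, hgeq⟩
          rcases my_mem_psmul.1 (hD1 w hw k) with ⟨g', hg', hgeq'⟩
          refine my_mem_psmul.2 ⟨g * g', my_one_mul_mem hg hg', ?_⟩
          have h12 : c * (ξ * ξ) * (g * g') =
              (algebraMap R (FractionRing R) ((f m').1 * (f m').1) * z) *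
              (algebraMap R (FractionRing R) (υ k) * algebraMap R (FractionRing R) (υ k) * w) := by
            calc c * (ξ * ξ) * (g * g') = (ξ * ξ * g) * (c * g') := by ring
              _ = _ := by rw [hgeq, hgeq']
          rw [h12]
          simp only [map_mul]
          ring
        · rintro h₁ h₂ ⟨m₁, hm₁⟩ ⟨m₂, hm₂⟩
          refine ⟨max m₁ m₂, fun m' hm' k => ?_⟩
          rw [mul_add]
          exact Submodule.add_mem _ (hm₁ m' (le_trans (le_max_left _ _) hm') k)
            (hm₂ m' (le_trans (le_max_right _ _) hm') k)
      -- the decisive element c·ξ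
      have hcξmem : c * ξ ∈ tOp R (FractionRing R) (It * It * J) := by
        rw [heqt]
        exact my_mem_psmul.2 ⟨ξ, hξIt, rfl⟩
      rcases my_mem_tOp hcξmem with h0 | ⟨H, hHb, hHfg, hHle, hHv⟩
      · exact mul_ne_zero hc0 hξ h0
      rcases hHfg with ⟨T, hT⟩
      have hTmem : ∀ h ∈ T, h ∈ It * It * J := fun h hh => hHle (hT ▸ Submodule.subset_span hh)
      choose! mh hmh using fun h hh => hC3 h (hTmem h hh)
      have hcξξ : c * (ξ * ξ) ≠ 0 := mul_ne_zero hc0 (mul_ne_zero hξ hξ)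
      have hφ : algebraMap R (FractionRing R)
            ((f (T.sup mh)).1 * (f (T.sup mh)).1 * (υ (T.sup mh) * υ (T.sup mh))) / (c * (ξ * ξ)) ∈
          (1 : Submodule R (FractionRing R)) / H := by
        refine Submodule.mem_div_iff_forall_mul_mem.2 fun h hh => ?_
        rw [← hT] at hh
        induction hh using Submodule.span_induction with
        | mem h hmem =>
          rcases my_mem_psmul.1 (hmh h hmem (T.sup mh) (Finset.le_sup hmem) (T.sup mh))
            with ⟨g, hg, hgeq⟩
          have heq4 : algebraMap R (FractionRing R)
              ((f (T.sup mh)).1 * (f (T.sup mh)).1 * (υ (T.sup mh) * υ (T.sup mh))) /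
                (c * (ξ * ξ)) * h = g := by
            rw [div_mul_eq_mul_div, ← hgeq, mul_div_cancel_left₀ _ hcξξ]
          rwa [heq4]
        | zero => rw [mul_zero]; exact Submodule.zero_mem _
        | add y₁ y₂ _ _ hy₁ hy₂ => rw [mul_add]; exact Submodule.add_mem _ hy₁ hy₂
        | smul r y _ hy => rw [mul_smul_comm]; exact Submodule.smul_mem _ r hy
      have hHv' : c * ξ ∈ (1 : Submodule R (FractionRing R)) /
          ((1 : Submodule R (FractionRing R)) / H) := hHv
      have hfin := Submodule.mem_div_iff_forall_mul_mem.1 hHv' _ hφ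
      rcases Submodule.mem_one.1 hfin with ⟨r', hr'⟩
      have hBx : (υ (T.sup mh) * υ (T.sup mh)) * ((f (T.sup mh)).1 * (f (T.sup mh)).1)
          = x * r' := by
        apply hinj
        have hξr : ξ * algebraMap R (FractionRing R) r' = algebraMap R (FractionRing R)
            ((f (T.sup mh)).1 * (f (T.sup mh)).1 * (υ (T.sup mh) * υ (T.sup mh))) := by
          rw [hr']
          field_simp
        calc algebraMap R (FractionRing R)
              ((υ (T.sup mh) * υ (T.sup mh)) * ((f (T.sup mh)).1 * (f (T.sup mh)).1))
            = algebraMap R (FractionRing R)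
              ((f (T.sup mh)).1 * (f (T.sup mh)).1 * (υ (T.sup mh) * υ (T.sup mh))) := by
                rw [mul_comm]
          _ = ξ * algebraMap R (FractionRing R) r' := hξr.symm
          _ = algebraMap R (FractionRing R) (x * r') := by rw [map_mul, hξdef]
      have hυ2 : υ (T.sup mh) * υ (T.sup mh) ∉ 𝒩 (T.sup mh) := fun hmem =>
        (hstep5 (f (T.sup mh))) (((hstep1 (f (T.sup mh))).isPrime.mem_or_mem hmem).elim id id)
      exact hstep3 (f (T.sup mh)) (υ (T.sup mh) * υ (T.sup mh)) hυ2 r' hBx
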